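/- Equip ℝ³ with the norm ‖(x,y,z)‖ := max(|x| + |z|, √(x² + y²)), and let f(x,y,z) = −x. Define f₁(x,y,z) := −x + z if z ≥ 0 and −x otherwise, and f₂(x,y,z) := −x if z ≥ 0 and −x − z otherwise. Then f = min(f₁, f₂) pointwise, f₁ and f₂ are each 1-Lipschitz with respect to ‖·‖, and f₁ ≠ f and f₂ ≠ f. -/
import Mathlib


open Set

noncomputable section

/-- The norm `‖(x,y,z)‖ = max(|x| + |z|, √(x² + y²))` on `ℝ³`. -/
def N3 (p : ℝ × ℝ × ℝ) : ℝ :=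
  max (|p.1| + |p.2.2|) (Real.sqrt (p.1 ^ 2 + p.2.1 ^ 2))

/-- `f(x,y,z) = −x`. -/
def f3 (p : ℝ × ℝ × ℝ) : ℝ := -p.1

/-- `f₁(x,y,z) = −x + z` if `z ≥ 0`, and `−x` otherwise. -/
def f3₁ (p : ℝ × ℝ × ℝ) : ℝ := if 0 ≤ p.2.2 then -p.1 + p.2.2 else -p.1

/-- `f₂(x,y,z) = −x` if `z ≥ 0`, and `−x − z` otherwise. -/
def f3₂ (p : ℝ × ℝ × ℝ) : ℝ := if 0 ≤ p.2.2 then -p.1 else -p.1 - p.2.2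

lemma f3₁_eq (p : ℝ × ℝ × ℝ) : f3₁ p = -p.1 + max p.2.2 0 := by
  unfold f3₁; split
  · rw [max_eq_left (by linarith)]
  · rw [max_eq_right (le_of_lt (by linarith))]; ring

lemma f3₂_eq (p : ℝ × ℝ × ℝ) : f3₂ p = -p.1 + max (-p.2.2) 0 := by
  unfold f3₂; split
  · rw [max_eq_right (by linarith)]; ring
  · rw [max_eq_left (le_of_lt (by linarith))]; ring

lemma key (a b : ℝ × ℝ × ℝ) (g : ℝ → ℝ) (hg : ∀ s t : ℝ, |g s - g t| ≤ |s - t|) :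
    |(-a.1 + g a.2.2) - (-b.1 + g b.2.2)| ≤ N3 (a - b) := by
  have h1 : |(-a.1 + g a.2.2) - (-b.1 + g b.2.2)| ≤ |a.1 - b.1| + |g a.2.2 - g b.2.2| := by
    have := abs_sub_abs_le_abs_sub (-(a.1-b.1)) (-(g a.2.2 - g b.2.2))
    calc |(-a.1 + g a.2.2) - (-b.1 + g b.2.2)| = |(-(a.1-b.1)) + (g a.2.2 - g b.2.2)| := by ring_nf
    _ ≤ |(-(a.1-b.1))| + |g a.2.2 - g b.2.2| := abs_add_le _ _
    _ = |a.1 - b.1| + |g a.2.2 - g b.2.2| := by rw [abs_neg]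
  have h2 := hg a.2.2 b.2.2
  have h3 : |a.1 - b.1| + |a.2.2 - b.2.2| ≤ N3 (a - b) := le_max_left _ _
  linarith

theorem f_eq_min_of_lipschitz :
    (∀ p : ℝ × ℝ × ℝ, f3 p = min (f3₁ p) (f3₂ p)) ∧
    (∀ a b : ℝ × ℝ × ℝ, |f3₁ a - f3₁ b| ≤ N3 (a - b)) ∧
    (∀ a b : ℝ × ℝ × ℝ, |f3₂ a - f3₂ b| ≤ N3 (a - b)) ∧
    f3₁ ≠ f3 ∧ f3₂ ≠ f3 := by
  refine ⟨fun p => ?_, fun a b => ?_, fun a b => ?_, ?_, ?_⟩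
  · unfold f3 f3₁ f3₂; split <;> [rw [min_eq_right (by linarith)]; rw [min_eq_left (by linarith)]]
  · rw [f3₁_eq, f3₁_eq]
    exact key a b (fun s => max s 0) (fun s t => abs_max_sub_max_le_abs s t 0)
  · rw [f3₂_eq, f3₂_eq]
    have := key a b (fun s => max (-s) 0) (fun s t => by
      calc |max (-s) 0 - max (-t) 0| ≤ |(-s) - (-t)| := abs_max_sub_max_le_abs _ _ 0
      _ = |s - t| := by rw [← abs_neg]; ring_nf)
    exact this
  · intro h
    have := congrFun h (0, 0, 1)
    simp [f3, f3₁] at this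
  · intro h
    have := congrFun h (0, 0, -1)
    simp [f3, f3₂] at this
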